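/- arXiv:2106.08947 — 2 statements merged into one kernel-verified Lean document; each statement's English description precedes it below -/
import Mathlib

section
/- Let μ be a Borel measure on a closed ball B̄(r) ⊂ ℝ^d with finite total mass such that ∫_0 h_μ(t)/t^{d−1} dt < ∞ (convergence at 0). Then lim_{t→0+} h_μ(t) = 0 and lim_{t→0+} h_μ(t)·k_{d−2}(t) = 0; i.e., for d = 2, h_μ(t)·ln t → 0, and for d > 2, h_μ(t)/t^{d−2} → 0 as t → 0+. -/
open MeasureTheory Metric Set
open scoped ENNReal NNReal Topology

noncomputable section

/-- Euclidean space `ℝ^d`. -/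
abbrev Euc (d : ℕ) := EuclideanSpace ℝ (Fin d)

/-- `s_{d-1}`, the surface area of the unit sphere in `ℝ^d`. -/
def surfArea (d : ℕ) : ℝ := 2 * Real.pi ^ ((d : ℝ) / 2) / Real.Gamma ((d : ℝ) / 2)

/-- `d̂ := max {1, d-2}`. -/
def dhat (d : ℕ) : ℕ := max 1 (d - 2)

/-- The kernel `k_{d-2}`: `log t` for `d = 2` and `-t^{-(d-2)}` for `d > 2`. -/
def kk (d : ℕ) (t : ℝ) : ℝ := if d = 2 then Real.log t else -(t ^ (2 - (d : ℝ)))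

/-- The inverse function of `k_{d-2}` on its range. -/
def kkInv (d : ℕ) (s : ℝ) : ℝ :=
  if d = 2 then Real.exp s else (-s) ^ (1 / (2 - (d : ℝ)))

/-- The kernel `k_{d-2}` extended to `ℝ ∪ {-∞}`-values, with `k_{d-2}(t) = -∞` for `t ≤ 0`. -/
def kE (d : ℕ) (t : ℝ) : EReal := if t ≤ 0 then (⊥ : EReal) else (kk d t : EReal)

/-- The positive part of an extended real number, as an element of `ℝ≥0∞`. -/
def eplus (a : EReal) : ℝ≥0∞ := if a = ⊤ then ⊤ else ENNReal.ofReal a.toReal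

/-- The surface (area) measure on the sphere of radius `r` centered at `x` in `ℝ^d`:
the `(d-1)`-dimensional Hausdorff measure restricted to the sphere. -/
def sphMeasure (d : ℕ) (x : Euc d) (r : ℝ) : Measure (Euc d) :=
  (MeasureTheory.Measure.hausdorffMeasure ((d : ℝ) - 1)).restrict (sphere x r)

/-- The mean of an `ℝ ∪ {±∞}`-valued function over the sphere of radius `r` centered at `x`:
`C_u(x,r) = (1/(s_{d-1} r^{d-1})) ∫_{∂B̄_x(r)} u dσ`. -/
def sphMean (d : ℕ) (u : Euc d → EReal) (x : Euc d) (r : ℝ) : EReal :=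
  (((ENNReal.ofReal (surfArea d * r ^ (d - 1)))⁻¹ : ℝ≥0∞) : EReal) *
    (((∫⁻ y, eplus (u y) ∂sphMeasure d x r : ℝ≥0∞) : EReal)
      - ((∫⁻ y, eplus (-(u y)) ∂sphMeasure d x r : ℝ≥0∞) : EReal))

/-- `u` is subharmonic on a set `s ⊆ ℝ^d`: upper semicontinuous, `< +∞`, and satisfying the
sub-mean value inequality on every closed ball contained in `s`. -/
def SubharmonicOn (d : ℕ) (u : Euc d → EReal) (s : Set (Euc d)) : Prop :=
  UpperSemicontinuousOn u s ∧ (∀ x ∈ s, u x ≠ ⊤) ∧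
    ∀ x ∈ s, ∀ r : ℝ, 0 < r → closedBall x r ⊆ s → u x ≤ sphMean d u x r

/-- The (pointwise) Laplacian of a smooth function on `ℝ^d`. -/
def lap (d : ℕ) (φ : Euc d → ℝ) (x : Euc d) : ℝ :=
  ∑ i : Fin d,
    iteratedFDeriv ℝ 2 φ x ![EuclideanSpace.single i (1 : ℝ), EuclideanSpace.single i (1 : ℝ)]

/-- `ν` is the Riesz measure of `u` on the open set `s`, i.e.
`ν = (1/(s_{d-1} d̂)) Δu` in the sense of distributions. -/
def IsRieszMeasure (d : ℕ) (u : Euc d → EReal) (s : Set (Euc d)) (ν : Measure (Euc d)) : Prop :=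
  ∀ φ : Euc d → ℝ, ContDiff ℝ (⊤ : ℕ∞) φ → HasCompactSupport φ → tsupport φ ⊆ s →
    ∫ x, (u x).toReal * lap d φ x = (surfArea d * dhat d) * ∫ x, φ x ∂ν

/-- `C_{U⁺}(R)`: the mean of `U⁺` over the sphere of radius `R` centered at `0`. -/
def CplusE (d : ℕ) (U : Euc d → EReal) (R : ℝ) : ℝ≥0∞ :=
  (∫⁻ y, eplus (U y) ∂sphMeasure d 0 R) / ENNReal.ofReal (surfArea d * R ^ (d - 1))

/-- `N_ν(r,R) = d̂ ∫_r^R ν(B̄(t))/t^{d-1} dt`. -/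
def NCount (d : ℕ) (ν : Measure (Euc d)) (r R : ℝ) : ℝ≥0∞ :=
  (dhat d) * ∫⁻ t in Ioc r R, ν (closedBall 0 t) / ENNReal.ofReal (t ^ (d - 1))

/-- The difference Nevanlinna characteristic `T_U(r,R) = C_{U⁺}(R) + N_{Δ_U⁻}(r,R)`,
where `ν` stands for the lower variation `Δ_U⁻` of the Riesz charge of `U`. -/
def nevT (d : ℕ) (U : Euc d → EReal) (ν : Measure (Euc d)) (r R : ℝ) : ℝ≥0∞ :=
  CplusE d U R + NCount d ν r R

/-- The modulus of continuity of a measure: `h_μ(t) = sup_y μ(B̄_y(t))`. -/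
def hmod (d : ℕ) (μ : Measure (Euc d)) (t : ℝ) : ℝ≥0∞ := ⨆ y : Euc d, μ (closedBall y t)

/-- `∫_0^a h_μ(t)/t^{d-1} dt`. -/
def diniInt (d : ℕ) (μ : Measure (Euc d)) (a : ℝ) : ℝ≥0∞ :=
  ∫⁻ t in Ioc (0 : ℝ) a, hmod d μ t / ENNReal.ofReal (t ^ (d - 1))

/-- `A_d(r,R) := 2 ((R+r)/(R-r))^{d-1} max {1, (R-r)^{d-2}}`. -/
def Acoef (d : ℕ) (r R : ℝ) : ℝ :=
  2 * ((R + r) / (R - r)) ^ (d - 1) * max 1 ((R - r) ^ (d - 2))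

/-- A nontrivial (`≢ ±∞`) δ-subharmonic function on the closed ball `B̄(R) ⊆ ℝ^d`:
a difference `U = u - v` of functions subharmonic (and `≢ -∞`) on an open ball of some
radius `R' > R`, together with their Riesz measures `Δu`, `Δv`. -/
structure DsubhOn (d : ℕ) (R : ℝ) : Type where
  u : Euc d → EReal
  v : Euc d → EReal
  Δu : Measure (Euc d)
  Δv : Measure (Euc d)
  R' : ℝ
  hR' : R < R'
  hu : SubharmonicOn d u (ball 0 R')
  hv : SubharmonicOn d v (ball 0 R')
  hu_ne : ∃ x ∈ ball (0 : Euc d) R', u x ≠ ⊥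
  hv_ne : ∃ x ∈ ball (0 : Euc d) R', v x ≠ ⊥
  hΔu : IsRieszMeasure d u (ball 0 R') Δu
  hΔv : IsRieszMeasure d v (ball 0 R') Δv

/-- The δ-subharmonic function `U = u - v` itself. -/
def DsubhOn.U {d : ℕ} {R : ℝ} (F : DsubhOn d R) : Euc d → EReal := fun x => F.u x - F.v x

/-- The lower variation `Δ_U⁻` of the Riesz charge `Δ_U = Δu - Δv`. -/
def DsubhOn.lowerVar {d : ℕ} {R : ℝ} (F : DsubhOn d R) : Measure (Euc d) := F.Δv - F.Δu

lemma key_integral (d : ℕ) (hd : 2 ≤ d) (t δ : ℝ) (ht : 0 < t) (htδ : t ≤ δ) :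
    ∫⁻ s in Ioc t δ, (ENNReal.ofReal (s ^ (d - 1)))⁻¹ =
      ENNReal.ofReal ((kk d δ - kk d t) / (dhat d)) := by
  have hδ : 0 < δ := ht.trans_le htδ
  have h1 : ∫⁻ s in Ioc t δ, (ENNReal.ofReal (s ^ (d - 1)))⁻¹ =
      ∫⁻ s in Ioc t δ, ENNReal.ofReal ((s ^ (d - 1))⁻¹) := by
    apply lintegral_congr_ae
    filter_upwards [ae_restrict_mem measurableSet_Ioc] with s hs
    rw [← ENNReal.ofReal_inv_of_pos (pow_pos (ht.trans hs.1) _)]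
  have hcont : ContinuousOn (fun s : ℝ => (s ^ (d - 1))⁻¹) (Icc t δ) :=
    (continuous_pow (d-1)).continuousOn.inv₀ fun s hs => (pow_pos (ht.trans_le hs.1) _).ne'
  have hint : IntegrableOn (fun s : ℝ => (s ^ (d - 1))⁻¹) (Ioc t δ) :=
    (hcont.integrableOn_compact isCompact_Icc).mono_set Ioc_subset_Icc_self
  have hnn : 0 ≤ᵐ[volume.restrict (Ioc t δ)] (fun s : ℝ => (s ^ (d - 1))⁻¹) := by
    filter_upwards [ae_restrict_mem measurableSet_Ioc] with s hs
    exact inv_nonneg.mpr (pow_pos (ht.trans hs.1) _).le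
  rw [h1, ← ofReal_integral_eq_lintegral_ofReal hint hnn]
  congr 1
  rw [← intervalIntegral.integral_of_le htδ]
  have h0 : (0:ℝ) ∉ Set.uIcc t δ := by
    rw [Set.uIcc_of_le htδ]
    exact fun h => absurd h.1 (not_le.mpr ht)
  rcases eq_or_lt_of_le hd with h2 | h3
  · subst h2
    simp only [kk, if_pos rfl, dhat]
    norm_num
    rw [integral_inv h0, Real.log_div hδ.ne' ht.ne']
  · have hd3 : 3 ≤ d := h3
    have hne2 : d ≠ 2 := by omega
    have hz : ∀ s : ℝ, (s ^ (d - 1))⁻¹ = s ^ (-((d:ℤ) - 1)) := by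
      intro s
      rw [zpow_neg, ← zpow_natCast s (d-1)]
      congr 2
      omega
    simp_rw [hz]
    rw [integral_zpow (Or.inr ⟨by omega, h0⟩)]
    have he : -((d:ℤ) - 1) + 1 = -((d:ℤ) - 2) := by ring
    rw [he]
    have hkt : kk d t = -(t ^ (-((d:ℤ)-2)) : ℝ) := by
      rw [kk, if_neg hne2, ← Real.rpow_intCast t (-((d:ℤ)-2))]
      norm_num
    have hkδ : kk d δ = -(δ ^ (-((d:ℤ)-2)) : ℝ) := by
      rw [kk, if_neg hne2, ← Real.rpow_intCast δ (-((d:ℤ)-2))]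
      norm_num
    have hdh : (dhat d : ℝ) = (d : ℝ) - 2 := by
      rw [dhat, Nat.max_eq_right (by omega)]
      push_cast [Nat.cast_sub hd]
      ring
    rw [hkt, hkδ, hdh]
    push_cast
    have : ((d:ℝ) - 2) ≠ 0 := by
      have : (3:ℝ) ≤ d := by exact_mod_cast hd3
      linarith
    have h2d : (2:ℝ) - d ≠ 0 := by
      have : (3:ℝ) ≤ d := by exact_mod_cast hd3
      linarith
    field_simp
    have hc : ((2:ℝ) - d)⁻¹ * (2 - d) = 1 := inv_mul_cancel₀ h2d
    rw [div_eq_iff (show (-((d:ℝ) - 1) + 1) ≠ 0 by intro h; apply this; linarith)]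
    ring

lemma hmod_mono (d : ℕ) (μ : Measure (Euc d)) {t s : ℝ} (h : t ≤ s) :
    hmod d μ t ≤ hmod d μ s :=
  iSup_mono fun y => measure_mono (closedBall_subset_closedBall h)

lemma hmod_le_univ (d : ℕ) (μ : Measure (Euc d)) (t : ℝ) : hmod d μ t ≤ μ Set.univ :=
  iSup_le fun _ => measure_mono (subset_univ _)

lemma diniInt_mono (d : ℕ) (μ : Measure (Euc d)) {a b : ℝ} (h : a ≤ b) :
    diniInt d μ a ≤ diniInt d μ b :=
  lintegral_mono_set (Ioc_subset_Ioc_right h)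

lemma kk_mono (d : ℕ) (hd : 2 ≤ d) {t δ : ℝ} (ht : 0 < t) (h : t ≤ δ) :
    kk d t ≤ kk d δ := by
  unfold kk
  split
  · exact Real.log_le_log ht h
  · have h1 : δ ^ ((2:ℝ) - d) ≤ t ^ ((2:ℝ) - d) := by
      apply Real.rpow_le_rpow_of_nonpos ht h
      have : (2:ℝ) ≤ d := by exact_mod_cast hd
      linarith
    linarith

lemma kk_nonpos (d : ℕ) (hd : 2 ≤ d) {t : ℝ} (ht0 : 0 < t) (ht : t ≤ 1) :
    kk d t ≤ 0 := by
  unfold kk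
  split
  · exact Real.log_nonpos ht0.le ht
  · have := Real.rpow_nonneg ht0.le ((2:ℝ) - d)
    linarith

lemma keyB (d : ℕ) (hd : 2 ≤ d) (μ : Measure (Euc d)) (hμ : μ Set.univ ≠ ⊤)
    (t δ : ℝ) (ht : 0 < t) (htδ : t ≤ δ) :
    hmod d μ t * ENNReal.ofReal ((kk d δ - kk d t) / dhat d) ≤ diniInt d μ δ := by
  have hfin : hmod d μ t ≠ ⊤ := ne_top_of_le_ne_top hμ (hmod_le_univ d μ t)
  rw [← key_integral d hd t δ ht htδ, ← lintegral_const_mul' _ _ hfin]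
  refine le_trans (lintegral_mono_ae ?_) (lintegral_mono_set (Ioc_subset_Ioc_left ht.le))
  filter_upwards [ae_restrict_mem measurableSet_Ioc] with s hs
  rw [div_eq_mul_inv]
  exact mul_le_mul_left (hmod_mono d μ hs.1.le) _

lemma keyC (d : ℕ) (hd : 2 ≤ d) (μ : Measure (Euc d)) (t δ : ℝ) (ht : 0 < t)
    (h2 : t ≤ δ / 2) (hδ1 : δ ≤ 1) :
    hmod d μ t * 2⁻¹ ≤ diniInt d μ δ := by
  have hδ : 0 < δ := by linarith
  have step1 : (∫⁻ _ in Ioc (δ/2) δ, (hmod d μ t * (ENNReal.ofReal δ)⁻¹)) ≤ diniInt d μ δ := by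
    refine le_trans (lintegral_mono_ae ?_) (lintegral_mono_set (Ioc_subset_Ioc_left (by linarith)))
    filter_upwards [ae_restrict_mem measurableSet_Ioc] with s hs
    rw [div_eq_mul_inv]
    refine mul_le_mul' (hmod_mono d μ (h2.trans hs.1.le)) ?_
    apply ENNReal.inv_le_inv.mpr
    apply ENNReal.ofReal_le_ofReal
    calc s ^ (d - 1) ≤ s ^ 1 := by
          apply pow_le_pow_of_le_one (by linarith [hs.1]) (hs.2.trans hδ1) (by omega)
      _ = s := pow_one s
      _ ≤ δ := hs.2
  rw [setLIntegral_const] at step1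
  rw [Real.volume_Ioc] at step1
  have harith : (ENNReal.ofReal δ)⁻¹ * ENNReal.ofReal (δ - δ/2) = 2⁻¹ := by
    rw [mul_comm, ← div_eq_mul_inv, ← ENNReal.ofReal_div_of_pos hδ]
    have : (δ - δ/2) / δ = 2⁻¹ := by field_simp; ring
    rw [this, ← ENNReal.ofReal_ofNat 2, ← ENNReal.ofReal_inv_of_pos two_pos]
  rwa [mul_assoc, harith] at step1

lemma exists_small (d : ℕ) (μ : Measure (Euc d)) (ε : ℝ) (hε : 0 < ε)
    (hfin : diniInt d μ ε ≠ ⊤) (η : ℝ≥0∞) (hη : 0 < η) :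
    ∃ δ : ℝ, 0 < δ ∧ δ ≤ ε ∧ δ ≤ 1 ∧ diniInt d μ δ < η := by
  set ε' := min ε 1 with hε'def
  have hε' : 0 < ε' := lt_min hε one_pos
  set f : ℝ → ℝ≥0∞ := fun s => hmod d μ s / ENNReal.ofReal (s ^ (d - 1)) with hf
  set ρ := volume.withDensity f with hρdef
  have hρ : ∀ a : ℝ, ρ (Ioc 0 a) = diniInt d μ a := fun a =>
    withDensity_apply f measurableSet_Ioc
  set S : ℕ → Set ℝ := fun n => Ioc 0 (ε' / (n+1)) with hS
  have hanti : Antitone S := by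
    intro n m hnm
    apply Ioc_subset_Ioc_right
    apply div_le_div_of_nonneg_left hε'.le (by positivity)
    exact_mod_cast by exact_mod_cast add_le_add_left (Nat.cast_le.mpr hnm) 1
  have hone : ρ (S 0) ≠ ⊤ := by
    have : S 0 = Ioc 0 ε' := by simp [hS]
    rw [this, hρ]
    exact ne_top_of_le_ne_top hfin (diniInt_mono d μ (min_le_left _ _))
  have hempty : ⋂ n, S n = ∅ := by
    refine eq_empty_iff_forall_notMem.mpr fun x hx => ?_
    simp only [hS, mem_iInter, mem_Ioc] at hx
    have hx0 : 0 < x := (hx 0).1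
    obtain ⟨n, hn⟩ := exists_nat_gt (ε' / x)
    have h1 : x ≤ ε' / (n+1) := (hx n).2
    rw [le_div_iff₀ (by positivity)] at h1
    rw [div_lt_iff₀ hx0] at hn
    nlinarith [hx0.le]
  have htend : Filter.Tendsto (ρ ∘ S) Filter.atTop (𝓝 (ρ (⋂ n, S n))) :=
    tendsto_measure_iInter_atTop (fun n => measurableSet_Ioc.nullMeasurableSet) hanti ⟨0, hone⟩
  rw [hempty, measure_empty] at htend
  obtain ⟨n, hn⟩ := (htend.eventually_lt_const hη).exists
  have hle : ε' / (n+1) ≤ ε' := div_le_self hε'.le (by norm_num)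
  refine ⟨ε' / (n+1), by positivity, hle.trans (min_le_left _ _), hle.trans (min_le_right _ _), ?_⟩
  rw [← hρ]
  exact hn

lemma part1 (d : ℕ) (hd : 2 ≤ d) (μ : Measure (Euc d)) (ε : ℝ) (hε : 0 < ε)
    (hfin : diniInt d μ ε ≠ ⊤) :
    Filter.Tendsto (hmod d μ) (𝓝[>] (0:ℝ)) (𝓝 (0 : ℝ≥0∞)) := by
  rw [ENNReal.tendsto_nhds_zero]
  intro η hη
  obtain ⟨δ, hδ0, hδε, hδ1, hI⟩ := exists_small d μ ε hε hfin (2⁻¹ * η)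
    (ENNReal.mul_pos (by norm_num) hη.ne')
  filter_upwards [Ioo_mem_nhdsGT_of_mem (Set.left_mem_Ico.mpr (half_pos hδ0))] with t ht
  have hkc := keyC d hd μ t δ ht.1 ht.2.le hδ1
  have := hkc.trans_lt hI
  rw [mul_comm (2⁻¹ : ℝ≥0∞) η] at this
  exact ((ENNReal.mul_lt_mul_iff_left (by norm_num) (by norm_num)).mp this).le

lemma part2 (d : ℕ) (hd : 2 ≤ d) (μ : Measure (Euc d)) (hμ : μ Set.univ ≠ ⊤)
    (ε : ℝ) (hε : 0 < ε) (hfin : diniInt d μ ε ≠ ⊤) :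
    Filter.Tendsto (fun t => (hmod d μ t).toReal * kk d t) (𝓝[>] (0:ℝ)) (𝓝 (0:ℝ)) := by
  have hpart1 := part1 d hd μ ε hε hfin
  rw [NormedAddCommGroup.tendsto_nhds_zero]
  intro η hη
  set c : ℝ := (dhat d : ℝ) with hc
  have hc1 : (1:ℝ) ≤ c := by rw [hc, dhat]; exact_mod_cast le_max_left 1 (d-2)
  have hc0 : 0 < c := by linarith
  obtain ⟨δ, hδ0, hδε, hδ1, hI⟩ := exists_small d μ ε hε hfin
    (ENNReal.ofReal (η/(2*c))) (ENNReal.ofReal_pos.mpr (by positivity))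
  have hIreal : c * (diniInt d μ δ).toReal < η/2 := by
    have h2 : (diniInt d μ δ).toReal < η/(2*c) := ENNReal.toReal_lt_of_lt_ofReal hI
    calc c * (diniInt d μ δ).toReal < c * (η/(2*c)) := by
          exact mul_lt_mul_of_pos_left h2 hc0
      _ = η/2 := by field_simp
  set Kδ : ℝ := -(kk d δ) with hKδdef
  have hKδ0 : 0 ≤ Kδ := neg_nonneg.mpr (kk_nonpos d hd hδ0 hδ1)
  have hev := hpart1.eventually_lt_const
    (show (0:ℝ≥0∞) < ENNReal.ofReal (η/(2*(Kδ+1))) from ENNReal.ofReal_pos.mpr (by positivity))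
  filter_upwards [hev, Ioo_mem_nhdsGT_of_mem (Set.left_mem_Ico.mpr hδ0)] with t hev1 ht
  obtain ⟨ht0, htδ⟩ := ht
  have hIne : diniInt d μ δ ≠ ⊤ := (hI.trans ENNReal.ofReal_lt_top).ne
  set H : ℝ := (hmod d μ t).toReal with hH
  have hH0 : 0 ≤ H := ENNReal.toReal_nonneg
  have hkey := keyB d hd μ hμ t δ ht0 htδ.le
  have hnum : 0 ≤ (kk d δ - kk d t)/c :=
    div_nonneg (sub_nonneg.mpr (kk_mono d hd ht0 htδ.le)) hc0.le
  have h3 : H * ((kk d δ - kk d t)/c) ≤ (diniInt d μ δ).toReal := by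
    have h4 := ENNReal.toReal_mono hIne hkey
    rwa [ENNReal.toReal_mul, ENNReal.toReal_ofReal hnum] at h4
  rw [← mul_div_assoc] at h3
  have h5 : H * (kk d δ - kk d t) ≤ (diniInt d μ δ).toReal * c := (div_le_iff₀ hc0).mp h3
  have h4 : H * (-(kk d t)) ≤ c * (diniInt d μ δ).toReal + H * Kδ := by
    have heq : H * (-(kk d t)) = H * (kk d δ - kk d t) + H * Kδ := by rw [hKδdef]; ring
    rw [heq]
    linarith
  have hHlt : H < η/(2*(Kδ+1)) := ENNReal.toReal_lt_of_lt_ofReal hev1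
  have h6 : H * Kδ ≤ η/2 := by
    calc H * Kδ ≤ (η/(2*(Kδ+1))) * Kδ := mul_le_mul_of_nonneg_right hHlt.le hKδ0
      _ ≤ η/2 := by
        rw [div_mul_eq_mul_div, div_le_div_iff₀ (by positivity) two_pos]
        nlinarith
  have habs : |H * kk d t| = H * (-(kk d t)) := by
    rw [abs_mul, abs_of_nonneg hH0, abs_of_nonpos (kk_nonpos d hd ht0 (htδ.le.trans hδ1))]
  rw [Real.norm_eq_abs, habs]
  linarith

/-- if a Borel measure `μ` on `B̄(r) ⊆ ℝ^d` has finite total mass and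
`∫_0 h_μ(t)/t^{d-1} dt < ∞`, then `h_μ(t) → 0` and `h_μ(t)·k_{d-2}(t) → 0` as `t → 0⁺`. -/
theorem hmod_tendsto_zero (d : ℕ) (hd : 2 ≤ d) (r : ℝ) (hr : 0 < r)
    (μ : Measure (Euc d)) (hsupp : μ ((closedBall (0 : Euc d) r)ᶜ) = 0)
    (hM : μ (closedBall (0 : Euc d) r) ≠ ⊤)
    (hdini : ∃ ε : ℝ, 0 < ε ∧ diniInt d μ ε ≠ ⊤) :
    Filter.Tendsto (hmod d μ) (nhdsWithin (0 : ℝ) (Ioi 0)) (nhds (0 : ℝ≥0∞)) ∧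
    Filter.Tendsto (fun t => (hmod d μ t).toReal * kk d t)
      (nhdsWithin (0 : ℝ) (Ioi 0)) (nhds (0 : ℝ)) := by
  obtain ⟨ε, hε, hfin⟩ := hdini
  have hμ : μ Set.univ ≠ ⊤ := by
    have h1 := measure_union_le (μ := μ) (closedBall (0 : Euc d) r) (closedBall (0 : Euc d) r)ᶜ
    rw [union_compl_self, hsupp, add_zero] at h1
    exact ne_top_of_le_ne_top hM h1
  exact ⟨part1 d hd μ ε hε hfin, part2 d hd μ hμ ε hε hfin⟩

end
end

section
/- Let 0 < r < R < ∞ and let μ be a Borel measure on the closed ball B̄(r) ⊂ ℝ^d with finite total mass whose modulus of continuity satisfies ∫_0 h_μ(t)/t^{d−1} dt < ∞ (convergence at 0). Then for every y ∈ ℝ^d, with μ_y^rad(t) := μ(B̄_y(t)), the Stieltjes integral over (0, r] satisfies ∫_{(0,r]} ( k_{d−2}(R+r) − k_{d−2}(t) ) dμ_y^rad(t) ≤ d̂ · ∫_0^{R+r} h_μ(t)/t^{d−1} dt. -/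
open MeasureTheory Metric Set
open scoped ENNReal NNReal Topology

noncomputable section

private lemma kk_hasDerivAt (d : ℕ) (hd : 2 ≤ d) {s : ℝ} (hs : 0 < s) :
    HasDerivAt (kk d) ((dhat d : ℝ) / s ^ (d - 1)) s := by
  rcases eq_or_lt_of_le hd with h2 | h3
  · have hkk : kk d = Real.log := by funext t; simp [kk, ← h2]
    rw [hkk]
    have : (dhat d : ℝ) / s ^ (d - 1) = s⁻¹ := by
      rw [← h2]; norm_num [dhat]
    rw [this]
    exact Real.hasDerivAt_log hs.ne'
  · have hd2 : d ≠ 2 := by omega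
    have hkk : kk d = fun t : ℝ => -(t ^ (2 - (d : ℝ))) := by funext t; simp [kk, hd2]
    rw [hkk]
    have h := (Real.hasDerivAt_rpow_const (p := 2 - (d : ℝ)) (Or.inl hs.ne')).neg
    convert h using 1
    · rfl
    · rfl
    · rfl
    have hcast : ((dhat d : ℕ) : ℝ) = (d : ℝ) - 2 := by
      unfold dhat
      rw [max_eq_right (by omega)]
      push_cast [Nat.cast_sub hd]
      ring
    have hpow : (s ^ (d - 1) : ℝ) = s ^ ((d : ℝ) - 1) := by
      rw [← Real.rpow_natCast]
      congr 1
      push_cast [Nat.cast_sub (by omega : 1 ≤ d)]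
      ring
    rw [hcast, hpow, div_eq_mul_inv, ← Real.rpow_neg hs.le,
      show (2 : ℝ) - (d : ℝ) - 1 = -((d : ℝ) - 1) by ring]
    ring

private lemma kk_sub_eq (d : ℕ) (hd : 2 ≤ d) {t b : ℝ} (ht : 0 < t) (htb : t ≤ b) :
    ENNReal.ofReal (kk d b - kk d t)
      = ∫⁻ s in Ioc t b, (dhat d : ℝ≥0∞) / ENNReal.ofReal (s ^ (d - 1)) := by
  have hcont : ContinuousOn (fun s : ℝ => (dhat d : ℝ) / s ^ (d - 1)) (Icc t b) := by
    apply ContinuousOn.div continuousOn_const (by fun_prop)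
    intro x hx
    exact pow_ne_zero _ (lt_of_lt_of_le ht hx.1).ne'
  have hInt : IntegrableOn (fun s : ℝ => (dhat d : ℝ) / s ^ (d - 1)) (Ioc t b) volume :=
    (hcont.integrableOn_compact isCompact_Icc).mono_set Ioc_subset_Icc_self
  have hftc : ∫ s in t..b, (dhat d : ℝ) / s ^ (d - 1) = kk d b - kk d t := by
    apply intervalIntegral.integral_eq_sub_of_hasDerivAt
    · intro s hs
      rw [uIcc_of_le htb] at hs
      exact kk_hasDerivAt d hd (ht.trans_le hs.1)
    · apply ContinuousOn.intervalIntegrable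
      rwa [uIcc_of_le htb]
  have hnn : 0 ≤ᵐ[volume.restrict (Ioc t b)] fun s : ℝ => (dhat d : ℝ) / s ^ (d - 1) := by
    rw [Filter.EventuallyLE, ae_restrict_iff' measurableSet_Ioc]
    refine Filter.Eventually.of_forall fun s hs => ?_
    have hs0 : 0 < s := ht.trans hs.1
    positivity
  rw [← hftc, intervalIntegral.integral_of_le htb,
    MeasureTheory.ofReal_integral_eq_lintegral_ofReal hInt hnn]
  apply setLIntegral_congr_fun measurableSet_Ioc
  intro s hs
  have hs0 : 0 < s := ht.trans hs.1
  dsimp only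
  rw [ENNReal.ofReal_div_of_pos (by positivity), ENNReal.ofReal_natCast]

/-- for a Borel measure `μ` on `B̄(r) ⊆ ℝ^d` of finite total mass satisfying the
Dini-type condition, for every `y ∈ ℝ^d` the Lebesgue–Stieltjes integral over `(0,r]` of
`k(R+r) - k(t)` against `t ↦ μ_y^{rad}(t) = μ(B̄_y(t))` (i.e. against the image of `μ` under
`x ↦ |x - y|`) is at most `d̂ ∫_0^{R+r} h_μ(t)/t^{d-1} dt`. -/
theorem stieltjes_green_integral_bound (d : ℕ) (hd : 2 ≤ d) (r R : ℝ)
    (hr : 0 < r) (hrR : r < R)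
    (μ : Measure (Euc d)) (hsupp : μ ((closedBall (0 : Euc d) r)ᶜ) = 0)
    (hM : μ (closedBall (0 : Euc d) r) ≠ ⊤)
    (hdini : ∃ ε : ℝ, 0 < ε ∧ diniInt d μ ε ≠ ⊤) (y : Euc d) :
    ∫⁻ t in Ioc (0 : ℝ) r, eplus (kE d (R + r) - kE d t)
        ∂(Measure.map (fun x => dist x y) μ)
      ≤ (dhat d) * diniInt d μ (R + r) := by
  classical
  set b := R + r with hb_def
  have hR0 : 0 < R := hr.trans hrR
  have hb : 0 < b := by positivity
  have hrb : r ≤ b := by simp [hb_def]; positivity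
  set ν := Measure.map (fun x => dist x y) μ with hν
  have hmeas_dist : Measurable fun x : Euc d => dist x y :=
    (continuous_id.dist continuous_const).measurable
  have hμfin : IsFiniteMeasure μ := by
    constructor
    have h1 : μ Set.univ ≤ μ (closedBall (0 : Euc d) r) + μ ((closedBall (0 : Euc d) r)ᶜ) := by
      rw [← union_compl_self (closedBall (0 : Euc d) r)]
      exact measure_union_le _ _
    rw [hsupp, add_zero] at h1
    exact h1.trans_lt hM.lt_top
  haveI := hμfin
  haveI hνfin : IsFiniteMeasure ν := by
    constructor
    rw [hν, Measure.map_apply hmeas_dist MeasurableSet.univ]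
    exact measure_lt_top μ _
  set g : ℝ → ℝ≥0∞ := fun s => (dhat d : ℝ≥0∞) / ENNReal.ofReal (s ^ (d - 1)) with hg_def
  have hg : Measurable g := by
    apply Measurable.div measurable_const
    exact ENNReal.measurable_ofReal.comp (measurable_id.pow_const _)
  set F : ℝ → ℝ → ℝ≥0∞ := fun t s => if t < s then g s else 0 with hF_def
  have hFmeas : Measurable (Function.uncurry F) := by
    apply Measurable.ite (measurableSet_lt measurable_fst measurable_snd)
    · exact hg.comp measurable_snd
    · exact measurable_const
  have step1 : ∀ t ∈ Ioc (0 : ℝ) r,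
      eplus (kE d b - kE d t) = ∫⁻ s in Ioc (0 : ℝ) b, F t s := by
    intro t ht
    have ht0 : 0 < t := ht.1
    have htb : t ≤ b := ht.2.trans hrb
    have h1 : kE d b = ((kk d b : ℝ) : EReal) := by simp [kE, not_le.2 hb]
    have h2 : kE d t = ((kk d t : ℝ) : EReal) := by simp [kE, not_le.2 ht0]
    have h3 : eplus (kE d b - kE d t) = ENNReal.ofReal (kk d b - kk d t) := by
      rw [h1, h2,
        show ((kk d b : ℝ) : EReal) - ((kk d t : ℝ) : EReal)
          = (((kk d b - kk d t : ℝ)) : EReal) from (EReal.coe_sub _ _).symm]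
      unfold eplus
      rw [if_neg (EReal.coe_ne_top _), EReal.toReal_coe]
    rw [h3, kk_sub_eq d hd ht0 htb]
    have h4 : ∀ s : ℝ, F t s = (Ioi t).indicator g s := by
      intro s; simp [hF_def, Set.indicator_apply, mem_Ioi]
    calc ∫⁻ s in Ioc t b, g s
        = ∫⁻ s in Ioi t, g s ∂(volume.restrict (Ioc 0 b)) := by
          have hset : Ioi t ∩ Ioc (0 : ℝ) b = Ioc t b := by
            ext x
            simp only [mem_inter_iff, mem_Ioi, mem_Ioc]
            constructor
            · rintro ⟨h1, _, h2⟩; exact ⟨h1, h2⟩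
            · intro hx; exact ⟨hx.1, ht0.trans hx.1, hx.2⟩
          rw [Measure.restrict_restrict measurableSet_Ioi, hset]
      _ = ∫⁻ s in Ioc (0 : ℝ) b, (Ioi t).indicator g s := by
          rw [lintegral_indicator measurableSet_Ioi]
      _ = ∫⁻ s in Ioc (0 : ℝ) b, F t s := by
          apply lintegral_congr; intro s; rw [h4]
  have step4 : ∀ s : ℝ,
      ∫⁻ t in Ioc (0 : ℝ) r, F t s ∂ν
        ≤ (dhat d : ℝ≥0∞) * (hmod d μ s / ENNReal.ofReal (s ^ (d - 1))) := by
    intro s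
    have h5 : ∀ t : ℝ, F t s = (Iio s).indicator (fun _ => g s) t := by
      intro t; simp [hF_def, Set.indicator_apply, mem_Iio]
    have h6 : ∫⁻ t in Ioc (0 : ℝ) r, F t s ∂ν = g s * ν (Iio s ∩ Ioc 0 r) := by
      calc ∫⁻ t in Ioc (0 : ℝ) r, F t s ∂ν
          = ∫⁻ t in Ioc (0 : ℝ) r, (Iio s).indicator (fun _ => g s) t ∂ν := by
            apply lintegral_congr; intro t; rw [h5]
        _ = ∫⁻ _ in Iio s, g s ∂(ν.restrict (Ioc 0 r)) := by
            rw [lintegral_indicator measurableSet_Iio]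
        _ = g s * ν (Iio s ∩ Ioc 0 r) := by
            rw [Measure.restrict_restrict measurableSet_Iio, setLIntegral_const]
    rw [h6]
    have h7 : ν (Iio s ∩ Ioc 0 r) ≤ hmod d μ s := by
      calc ν (Iio s ∩ Ioc 0 r) ≤ ν (Iio s) := measure_mono inter_subset_left
        _ = μ ((fun x => dist x y) ⁻¹' Iio s) := by
            rw [hν, Measure.map_apply hmeas_dist measurableSet_Iio]
        _ = μ (ball y s) := by
            have : (fun x : Euc d => dist x y) ⁻¹' Iio s = ball y s := by
              ext x; simp [mem_ball]
            rw [this]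
        _ ≤ μ (closedBall y s) := measure_mono ball_subset_closedBall
        _ ≤ hmod d μ s := le_iSup (fun z => μ (closedBall z s)) y
    calc g s * ν (Iio s ∩ Ioc 0 r) ≤ g s * hmod d μ s :=
          mul_le_mul_right h7 _
      _ = (dhat d : ℝ≥0∞) * (hmod d μ s / ENNReal.ofReal (s ^ (d - 1))) := by
          simp only [hg_def, div_eq_mul_inv]
          ring
  calc ∫⁻ t in Ioc (0 : ℝ) r, eplus (kE d b - kE d t) ∂ν
      = ∫⁻ t in Ioc (0 : ℝ) r, (∫⁻ s in Ioc (0 : ℝ) b, F t s) ∂ν :=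
        setLIntegral_congr_fun measurableSet_Ioc step1
    _ = ∫⁻ s in Ioc (0 : ℝ) b, (∫⁻ t in Ioc (0 : ℝ) r, F t s ∂ν) :=
        lintegral_lintegral_swap hFmeas.aemeasurable
    _ ≤ ∫⁻ s in Ioc (0 : ℝ) b,
          (dhat d : ℝ≥0∞) * (hmod d μ s / ENNReal.ofReal (s ^ (d - 1))) :=
        lintegral_mono step4
    _ = (dhat d : ℝ≥0∞) * diniInt d μ b := by
        rw [diniInt]
        exact lintegral_const_mul' _ _ (ENNReal.natCast_ne_top _)


end
end
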